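/- arXiv:0905.1980 — 3 statements merged into one kernel-verified Lean document; each statement's English description precedes it below -/
import Mathlib

section
/- Let μ be a finite, regular Borel measure on ℝ, let h be a dimension function, let E ⊆ ℝ, and let c > 0. If liminf_{r→0⁺} μ(B(x₀,r))/h(r) < c for every x₀ ∈ E, then the h-packing measure satisfies P^h(E) ≥ μ(E)/c. -/
open Set Filter Metric MeasureTheory
open scoped ENNReal NNReal Topology

noncomputable section

/-- The `h`-Hausdorff measure of `E ⊆ ℝ`:
`H^h(E) = lim_{δ→0⁺} inf {Σᵢ h(|Eᵢ|) : E ⊆ ⋃ᵢ Eᵢ, |Eᵢ| ≤ δ}`.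
Since the inner infimum is antitone in `δ`, the limit as `δ → 0⁺` is the
supremum over `0 < δ ≤ A` (the parameter `A` records the domain `(0,A]` of the
dimension function `h`; by monotonicity the value of the limit is unchanged). -/
def Hh (A : ℝ) (h : ℝ → ℝ≥0∞) (E : Set ℝ) : ℝ≥0∞ :=
  ⨆ (δ : ℝ) (_ : 0 < δ) (_ : δ ≤ A),
    ⨅ (t : ℕ → Set ℝ) (_ : E ⊆ ⋃ n, t n) (_ : ∀ n, Metric.diam (t n) ≤ δ),
      ∑' n, h (Metric.diam (t n))

/-- A `δ`-packing of `E`: a countable disjoint family of open balls centered at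
points of `E` with diameters less than `δ`, recorded as a set of
(center, radius) pairs. -/
def IsPacking (E : Set ℝ) (δ : ℝ) (P : Set (ℝ × ℝ)) : Prop :=
  P.Countable ∧ (∀ p ∈ P, p.1 ∈ E ∧ 0 < p.2 ∧ 2 * p.2 < δ) ∧
    P.PairwiseDisjoint fun p => Metric.ball p.1 p.2

/-- The `h`-packing pre-measure of `E ⊆ ℝ`:
`P₀^h(E) = lim_{δ→0⁺} sup {Σᵢ h(|Bᵢ|) : {Bᵢ} is a δ-packing of E}`.
The inner supremum is monotone in `δ`, so the limit as `δ → 0⁺` is the infimum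
over `0 < δ ≤ A`. -/
def P0h (A : ℝ) (h : ℝ → ℝ≥0∞) (E : Set ℝ) : ℝ≥0∞ :=
  ⨅ (δ : ℝ) (_ : 0 < δ) (_ : δ ≤ A),
    ⨆ (P : Set (ℝ × ℝ)) (_ : IsPacking E δ P), ∑' p : P, h (2 * (p : ℝ × ℝ).2)

/-- The `h`-packing measure: `P^h(E) = inf {Σᵢ P₀^h(Eᵢ) : E = ⋃ᵢ Eᵢ}`. -/
def Ph (A : ℝ) (h : ℝ → ℝ≥0∞) (E : Set ℝ) : ℝ≥0∞ :=
  ⨅ (t : ℕ → Set ℝ) (_ : E = ⋃ n, t n), ∑' n, P0h A h (t n)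

/-- `h` is a dimension function with domain `(0, A]`: continuous, increasing,
doubling, positive, with `h(x) → 0` as `x → 0⁺`.  We record partial functions
`(0,A] → (0,∞]` as functions `ℝ → ℝ≥0∞` extended by `0` on nonpositive
arguments (the continuous extension at `0`). -/
structure IsDimFun (A : ℝ) (h : ℝ → ℝ≥0∞) : Prop where
  posA : 0 < A
  zero_of_nonpos : ∀ x : ℝ, x ≤ 0 → h x = 0
  pos : ∀ x ∈ Set.Ioc (0 : ℝ) A, 0 < h x
  continuousOn : ContinuousOn h (Set.Ioc 0 A)
  strictMonoOn : StrictMonoOn h (Set.Ioc 0 A)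
  doubling : ∃ τ : ℝ≥0∞, 0 < τ ∧ τ ≠ ∞ ∧ ∀ x : ℝ, 0 < x → 2 * x ≤ A → τ * h (2 * x) ≤ h x
  tendsto_zero : Tendsto h (nhdsWithin 0 (Set.Ioi 0)) (nhds 0)

/-- `f ≼ h` on `(0, A]`: there is a (finite, positive) constant `c` with
`f(x) ≤ c·h(x)` for all `x ∈ (0,A]`. -/
def FLeq (A : ℝ) (f h : ℝ → ℝ≥0∞) : Prop :=
  ∃ c : ℝ≥0∞, 0 < c ∧ c ≠ ∞ ∧ ∀ x ∈ Set.Ioc (0 : ℝ) A, f x ≤ c * h x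

/-- `f ≡ h` on `(0, A]`: `f ≼ h` and `h ≼ f`. -/
def FEquiv (A : ℝ) (f h : ℝ → ℝ≥0∞) : Prop := FLeq A f h ∧ FLeq A h f

/-- Tail of a series: `rTail a n = Σ_{j ≥ n} a j` (0-based indexing, so the
paper's `r_n`, `n ≥ 1`, is `rTail a (n-1)`). -/
def rTail (a : ℕ → ℝ) (n : ℕ) : ℝ := ∑' k : ℕ, a (n + k)

/-- In the Cantor construction for the gap sequence `a`, the gaps are indexed
by the nodes `m ≥ 1` of the infinite binary tree in heap order (node `m` has
children `2m, 2m+1`), the gap at node `m` having length `a (m-1)`.  `nodeLen a m`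
is the sum of the lengths of all gaps in the subtree rooted at `m`, i.e. the
length of the step interval corresponding to node `m`. -/
def nodeLen (a : ℕ → ℝ) (m : ℕ) : ℝ :=
  ∑' k : ℕ, ∑ i ∈ Finset.range (2 ^ k), a (m * 2 ^ k + i - 1)

/-- Left endpoint of the `j`-th (0 ≤ j < 2^k, left to right) step-`k` interval
in the Cantor construction for the gap sequence `a` (realized in `[0, Σ a]`):
a left child keeps its parent's left endpoint; a right child's interval starts
after its left sibling's interval followed by the parent's gap. -/
def leftEnd (a : ℕ → ℝ) : ℕ → ℕ → ℝ
  | 0, _ => 0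
  | (k + 1), j =>
    if j % 2 = 0 then leftEnd a k (j / 2)
    else leftEnd a k (j / 2) + nodeLen a (2 ^ (k + 1) + j - 1) + a (2 ^ k + j / 2 - 1)

/-- The Cantor set `C_a` associated with a (positive, non-increasing, summable)
sequence `a`, realized inside the interval `[0, Σ a]`: the intersection over
`k` of the unions of the `2^k` step-`k` intervals. -/
def cantorSetOf (a : ℕ → ℝ) : Set ℝ :=
  ⋂ k : ℕ, ⋃ j ∈ Finset.range (2 ^ k),
    Set.Icc (leftEnd a k j) (leftEnd a k j + nodeLen a (2 ^ k + j))

/-- `h` (increasing and continuous on `(0, A]`) is associated to the sequence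
`a`: the sequence `{h(r_n/n)}` is equivalent to `{1/n}`, i.e. there are
constants `0 < c₁, c₂ < ∞` with `c₁ ≤ n · h(r_n/n) ≤ c₂` for all `n ≥ 1`
(0-based: `n ≥ 1` corresponds to `n+1` below). -/
def IsAssociated (A : ℝ) (h : ℝ → ℝ≥0∞) (a : ℕ → ℝ) : Prop :=
  ContinuousOn h (Set.Ioc 0 A) ∧ StrictMonoOn h (Set.Ioc 0 A) ∧
  ∃ c₁ c₂ : ℝ≥0∞, 0 < c₁ ∧ c₂ ≠ ∞ ∧ ∀ n : ℕ,
    c₁ ≤ ((n : ℝ≥0∞) + 1) * h (rTail a n / ((n : ℝ) + 1)) ∧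
    ((n : ℝ≥0∞) + 1) * h (rTail a n / ((n : ℝ) + 1)) ≤ c₂

/-- Weak tail-equivalence: there are positive integers `j, k` with
`r_n^{(a)} ≥ r_{jn}^{(b)}/j` and `r_n^{(b)} ≥ r_{kn}^{(a)}/k` for all `n ≥ 1`
(0-based shift: paper's `r_n` is `rTail · (n-1)`). -/
def WeakTailEquiv (a b : ℕ → ℝ) : Prop :=
  ∃ j k : ℕ, 0 < j ∧ 0 < k ∧
    (∀ n : ℕ, rTail b (j * (n + 1) - 1) / (j : ℝ) ≤ rTail a n) ∧
    (∀ n : ℕ, rTail a (k * (n + 1) - 1) / (k : ℝ) ≤ rTail b n)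

/-- Tail-equivalence: the sequences of tails are equivalent, i.e. the ratios
`r_n^{(a)}/r_n^{(b)}` are bounded above and below by positive constants. -/
def TailEquiv (a b : ℕ → ℝ) : Prop :=
  ∃ c₁ c₂ : ℝ, 0 < c₁ ∧ ∀ n : ℕ,
    c₁ ≤ rTail a n / rTail b n ∧ rTail a n / rTail b n ≤ c₂

/-- The Hausdorff dimension of `E`, computed from the `h_s`-Hausdorff measures,
`h_s(x) = x^s`:  `dim_H E = sup {s > 0 : H^{h_s}(E) = ∞}`. -/
def hausdDim (A : ℝ) (E : Set ℝ) : ℝ≥0∞ :=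
  ⨆ (s : ℝ) (_ : 0 < s) (_ : Hh A (fun x => ENNReal.ofReal (x ^ s)) E = ∞),
    ENNReal.ofReal s

/-- The packing dimension of `E`: `dim_P E = sup {s > 0 : P^{h_s}(E) = ∞}`. -/
def packDim (A : ℝ) (E : Set ℝ) : ℝ≥0∞ :=
  ⨆ (s : ℝ) (_ : 0 < s) (_ : Ph A (fun x => ENNReal.ofReal (x ^ s)) E = ∞),
    ENNReal.ofReal s

/-- The pre-packing dimension of `E`: `dim_{P₀} E = sup {s > 0 : P₀^{h_s}(E) = ∞}`. -/
def prePackDim (A : ℝ) (E : Set ℝ) : ℝ≥0∞ :=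
  ⨆ (s : ℝ) (_ : 0 < s) (_ : P0h A (fun x => ENNReal.ofReal (x ^ s)) E = ∞),
    ENNReal.ofReal s

/-- `f ≼ h` on the set `S`, for real-valued functions. -/
def RLeqOn (S : Set ℝ) (f h : ℝ → ℝ) : Prop :=
  ∃ c : ℝ, 0 < c ∧ ∀ x ∈ S, f x ≤ c * h x

/-- `f ≡ h` on the set `S`, for real-valued functions. -/
def REquivOn (S : Set ℝ) (f h : ℝ → ℝ) : Prop := RLeqOn S f h ∧ RLeqOn S h f

/-- Real-valued version of `IsAssociated`: `h : (0,A] → (0,∞)` is increasing,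
continuous, positive and `{h(r_n/n)} ≡ {1/n}`. -/
def IsAssociatedR (A : ℝ) (h : ℝ → ℝ) (a : ℕ → ℝ) : Prop :=
  ContinuousOn h (Set.Ioc 0 A) ∧ StrictMonoOn h (Set.Ioc 0 A) ∧
  (∀ x ∈ Set.Ioc (0 : ℝ) A, 0 < h x) ∧
  ∃ c₁ c₂ : ℝ, 0 < c₁ ∧ ∀ n : ℕ,
    c₁ ≤ ((n : ℝ) + 1) * h (rTail a n / ((n : ℝ) + 1)) ∧
    ((n : ℝ) + 1) * h (rTail a n / ((n : ℝ) + 1)) ≤ c₂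

end
/-- Lemma: if `μ` is a finite regular Borel measure, `h` a
dimension function, `c > 0`, and `liminf_{r→0⁺} μ(B(x₀,r))/h(r) < c` for every
`x₀ ∈ E`, then `P^h(E) ≥ μ(E)/c`. -/
theorem packing_measure_lower_bound (A : ℝ) (μ : Measure ℝ)
    [IsFiniteMeasure μ] [MeasureTheory.Measure.Regular μ]
    (h : ℝ → ℝ≥0∞) (hd : IsDimFun A h) (E : Set ℝ) (c : ℝ≥0∞) (hc : 0 < c)
    (hlim : ∀ x₀ ∈ E,
      Filter.liminf (fun r : ℝ => μ (Metric.ball x₀ r) / h r)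
        (nhdsWithin 0 (Set.Ioi 0)) < c) :
    μ E / c ≤ Ph A h E := by
  -- Key lemma: for F ⊆ E, μ F / c ≤ P0h A h F.
  have key : ∀ F : Set ℝ, F ⊆ E → μ F / c ≤ P0h A h F := by
    intro F hFE
    refine le_iInf fun δ => le_iInf fun hδ0 => le_iInf fun hδA => ?_
    refine ENNReal.div_le_of_le_mul ?_
    -- admissible radii at x: closed ball measure controlled by c * h r
    set f : ℝ → Set ℝ := fun x => {r | μ (Metric.closedBall x r) ≤ c * h r} with hfdef
    have hdens : ∀ x ∈ F, ∀ ε > 0, (f x ∩ Ioo 0 ε).Nonempty := by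
      intro x hxF ε hε
      have hfreq : ∃ᶠ r in 𝓝[>] (0:ℝ), μ (Metric.ball x r) / h r < c :=
        Filter.frequently_lt_of_liminf_lt (by isBoundedDefault) (hlim x (hFE hxF))
      rw [Filter.frequently_iff] at hfreq
      obtain ⟨r, hrU, hrlt⟩ :=
        hfreq (Ioo_mem_nhdsGT_of_mem ⟨le_refl (0:ℝ), lt_min hε hd.posA⟩)
      have hr0 : 0 < r := hrU.1
      have hrA : r ≤ A := le_of_lt (lt_of_lt_of_le hrU.2 (min_le_right _ _))
      have hrε : r < ε := lt_of_lt_of_le hrU.2 (min_le_left _ _)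
      have hhr0 : h r ≠ 0 := (hd.pos r ⟨hr0, hrA⟩).ne'
      have hball : μ (Metric.ball x r) < c * h r := by
        rcases eq_or_ne (h r) ∞ with hT | hT
        · rw [hT, ENNReal.mul_top hc.ne']
          exact measure_lt_top μ _
        · exact (ENNReal.div_lt_iff (Or.inl hhr0) (Or.inl hT)).mp hrlt
      -- use continuity of h at r from within to find r' < r with
      -- μ (closedBall x r') ≤ c * h r'
      have hcont : Filter.Tendsto (fun s => c * h s) (𝓝[Set.Ioo (0:ℝ) r] r)
          (𝓝 (c * h r)) := by
        have h1 : Filter.Tendsto h (𝓝[Set.Ioc (0:ℝ) A] r) (𝓝 (h r)) :=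
          hd.continuousOn.continuousWithinAt ⟨hr0, hrA⟩
        have h2 : Filter.Tendsto h (𝓝[Set.Ioo (0:ℝ) r] r) (𝓝 (h r)) :=
          h1.mono_left (nhdsWithin_mono _ (fun s hs => ⟨hs.1, le_of_lt (lt_of_lt_of_le hs.2 hrA)⟩))
        exact ENNReal.Tendsto.const_mul h2 (Or.inl hhr0)
      have hev : ∀ᶠ s in 𝓝[Set.Ioo (0:ℝ) r] r, μ (Metric.ball x r) < c * h s :=
        hcont.eventually (eventually_gt_nhds hball)
      have : NeBot (𝓝[Set.Ioo (0:ℝ) r] r) := right_nhdsWithin_Ioo_neBot hr0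
      obtain ⟨r', hr'mem, hr'lt⟩ := (hev.and (eventually_mem_nhdsWithin)).exists
      refine ⟨r', ?_, hr'lt.1, lt_trans hr'lt.2 hrε⟩
      have hsub : Metric.closedBall x r' ⊆ Metric.ball x r :=
        Metric.closedBall_subset_ball hr'lt.2
      exact le_of_lt (lt_of_le_of_lt (measure_mono hsub) hr'mem)
    -- apply the Besicovitch covering theorem
    obtain ⟨t, r, ht_count, htF, hrt, hμt, hdisj⟩ :=
      Besicovitch.exists_disjoint_closedBall_covering_ae μ f F hdens
        (fun _ => min (δ / 2) (A / 2))
        (fun x _ => lt_min (half_pos hδ0) (half_pos hd.posA))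
    -- the resulting packing
    set P : Set (ℝ × ℝ) := (fun x => (x, r x)) '' t with hPdef
    have hinj : Set.InjOn (fun x => (x, r x)) t := fun a _ b _ hab =>
      congrArg Prod.fst hab
    have hpack : IsPacking F δ P := by
      refine ⟨ht_count.image _, ?_, ?_⟩
      · rintro p ⟨x, hx, rfl⟩
        refine ⟨htF hx, (hrt x hx).2.1, ?_⟩
        have := (hrt x hx).2.2
        have h1 : r x < δ / 2 := lt_of_lt_of_le this (min_le_left _ _)
        linarith
      · rintro p ⟨x, hx, rfl⟩ q ⟨y, hy, rfl⟩ hpq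
        have hxy : x ≠ y := fun hh => hpq (by rw [hh])
        exact Disjoint.mono Metric.ball_subset_closedBall Metric.ball_subset_closedBall
          (hdisj hx hy hxy)
    -- measure estimate
    have hrbd : ∀ x ∈ t, μ (Metric.closedBall x (r x)) ≤ c * h (2 * r x) := by
      intro x hx
      have h1 : μ (Metric.closedBall x (r x)) ≤ c * h (r x) := (hrt x hx).1
      have hr0 : 0 < r x := (hrt x hx).2.1
      have hrA2 : r x < A / 2 := lt_of_lt_of_le (hrt x hx).2.2 (min_le_right _ _)
      have hmono : h (r x) ≤ h (2 * r x) := by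
        refine hd.strictMonoOn.monotoneOn ⟨hr0, by linarith⟩ ⟨by linarith, by linarith⟩
          (by linarith)
      exact le_trans h1 (mul_le_mul_right hmono c)
    have hcover : μ F ≤ ∑' x : t, μ (Metric.closedBall x (r x)) := by
      calc μ F ≤ μ ((F \ ⋃ x ∈ t, Metric.closedBall x (r x)) ∪
          ⋃ x ∈ t, Metric.closedBall x (r x)) :=
            measure_mono (fun y hy => by
              by_cases hmem : y ∈ ⋃ x ∈ t, Metric.closedBall x (r x)
              · exact Or.inr hmem
              · exact Or.inl ⟨hy, hmem⟩)
        _ ≤ μ (F \ ⋃ x ∈ t, Metric.closedBall x (r x)) +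
            μ (⋃ x ∈ t, Metric.closedBall x (r x)) := measure_union_le _ _
        _ = μ (⋃ x ∈ t, Metric.closedBall x (r x)) := by rw [hμt, zero_add]
        _ ≤ ∑' x : t, μ (Metric.closedBall x (r x)) :=
            measure_biUnion_le μ ht_count _
    have hsum : ∑' x : t, μ (Metric.closedBall x (r x)) ≤
        (∑' p : P, h (2 * (p : ℝ × ℝ).2)) * c := by
      calc ∑' x : t, μ (Metric.closedBall x (r x))
          ≤ ∑' x : t, c * h (2 * r x) := ENNReal.tsum_le_tsum (fun x => hrbd x x.2)
        _ = c * ∑' x : t, h (2 * r x) := ENNReal.tsum_mul_left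
        _ = (∑' p : P, h (2 * (p : ℝ × ℝ).2)) * c := by
            rw [hPdef, tsum_image (fun p : ℝ × ℝ => h (2 * p.2)) hinj, mul_comm]
    refine le_trans (le_trans hcover hsum) ?_
    gcongr
    exact le_iSup₂ (f := fun (P : Set (ℝ × ℝ)) (_ : IsPacking F δ P) =>
      ∑' p : P, h (2 * (p : ℝ × ℝ).2)) P hpack
  -- conclude
  refine le_iInf fun t => le_iInf fun htE => ?_
  have h1 : μ E ≤ ∑' n, μ (t n) := by
    rw [htE]; exact measure_iUnion_le t
  have h2 : ∀ n, μ (t n) / c ≤ P0h A h (t n) := fun n =>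
    key (t n) (by rw [htE]; exact Set.subset_iUnion t n)
  calc μ E / c = μ E * c⁻¹ := by rw [div_eq_mul_inv]
    _ ≤ (∑' n, μ (t n)) * c⁻¹ := mul_le_mul_left h1 _
    _ = ∑' n, μ (t n) * c⁻¹ := ENNReal.tsum_mul_right.symm
    _ ≤ ∑' n, P0h A h (t n) := ENNReal.tsum_le_tsum (fun n => by
        rw [← div_eq_mul_inv]; exact h2 n)
end

section
/- Let a and b be non-increasing, summable sequences of positive real numbers with tails rₙ^{(a)} and rₙ^{(b)}, and let h_a and h_b be dimension functions associated to a and b respectively. If h_a ≼ h_b, then there exists a positive integer j such that rₙ^{(a)} ≥ r_{jn}^{(b)}/j for all n. In particular, if h_a ≡ h_b then a and b are weak tail-equivalent. -/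
open Set Filter Metric MeasureTheory
open scoped ENNReal NNReal Topology

section Aux

lemma rTail_summable (a : ℕ → ℝ) (asum : Summable a) (n : ℕ) :
    Summable fun k => a (n + k) := by
  have := (summable_nat_add_iff n).mpr asum
  simpa [add_comm] using this

lemma rTail_pos (a : ℕ → ℝ) (apos : ∀ n, 0 < a n) (asum : Summable a) (n : ℕ) :
    0 < rTail a n :=
  Summable.tsum_pos (rTail_summable a asum n) (fun k => (apos _).le) 0 (apos _)

lemma rTail_le_zero (a : ℕ → ℝ) (apos : ∀ n, 0 < a n) (asum : Summable a) (n : ℕ) :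
    rTail a n ≤ rTail a 0 := by
  have h := Summable.sum_add_tsum_nat_add (f := a) n asum
  have hnn : 0 ≤ ∑ i ∈ Finset.range n, a i :=
    Finset.sum_nonneg fun i _ => (apos i).le
  have h1 : rTail a n = ∑' k, a (k + n) := by
    unfold rTail; simp [add_comm]
  have h2 : rTail a 0 = ∑' k, a k := by
    unfold rTail; simp
  rw [h1, h2]
  linarith [h]

lemma tail_bound_aux (A : ℝ) (a b : ℕ → ℝ)
    (apos : ∀ n, 0 < a n) (asum : Summable a)
    (bpos : ∀ n, 0 < b n) (bsum : Summable b)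
    (hra : rTail a 0 ≤ A) (hrb : rTail b 0 ≤ A)
    (ha hb : ℝ → ℝ≥0∞)
    (haa : IsAssociated A ha a) (hbb : IsAssociated A hb b)
    (hle : FLeq A ha hb) :
    ∃ j : ℕ, 0 < j ∧
      ∀ n : ℕ, rTail b (j * (n + 1) - 1) / (j : ℝ) ≤ rTail a n := by
  obtain ⟨-, -, c₁, c₂, hc₁, hc₂, hcbnd⟩ := haa
  obtain ⟨-, hbmono, d₁, d₂, hd₁, hd₂, hdbnd⟩ := hbb
  obtain ⟨c, hc0, hcT, hcle⟩ := hle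
  have hc₁T : c₁ ≠ ∞ :=
    ne_top_of_le_ne_top hc₂ ((hcbnd 0).1.trans (hcbnd 0).2)
  -- choose j with c * d₂ < j * c₁
  have hfin : c * d₂ / c₁ ≠ ∞ :=
    (ENNReal.div_lt_top (ENNReal.mul_ne_top hcT hd₂) hc₁.ne').ne
  obtain ⟨N, hN⟩ := ENNReal.exists_nat_gt hfin
  set j : ℕ := N + 1 with hjdef
  have hjpos : 0 < j := Nat.succ_pos N
  have hkey : c * d₂ < (j : ℝ≥0∞) * c₁ := by
    have h1 : c * d₂ / c₁ < (j : ℝ≥0∞) := by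
      refine hN.trans_le ?_
      exact_mod_cast Nat.cast_le.mpr (Nat.le_succ N)
    exact (ENNReal.div_lt_iff (Or.inl hc₁.ne') (Or.inl hc₁T)).mp h1
  refine ⟨j, hjpos, fun n => ?_⟩
  set m : ℕ := j * (n + 1) with hmdef
  have hm1 : 1 ≤ m := Nat.one_le_iff_ne_zero.mpr (by positivity)
  have hmsub : m - 1 + 1 = m := Nat.sub_add_cancel hm1
  set xa : ℝ := rTail a n / ((n : ℝ) + 1) with hxadef
  set xb : ℝ := rTail b (m - 1) / (m : ℝ) with hxbdef
  have hn1 : (0 : ℝ) < (n : ℝ) + 1 := by positivity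
  have hmR : (0 : ℝ) < (m : ℝ) := by exact_mod_cast hm1
  have hxa : xa ∈ Set.Ioc (0 : ℝ) A := by
    constructor
    · exact div_pos (rTail_pos a apos asum n) hn1
    · calc rTail a n / ((n : ℝ) + 1) ≤ rTail a n := by
            apply div_le_self (rTail_pos a apos asum n).le
            linarith [Nat.cast_nonneg (α := ℝ) n]
          _ ≤ rTail a 0 := rTail_le_zero a apos asum n
          _ ≤ A := hra
  have hxb : xb ∈ Set.Ioc (0 : ℝ) A := by
    constructor
    · exact div_pos (rTail_pos b bpos bsum _) hmR
    · calc rTail b (m - 1) / (m : ℝ) ≤ rTail b (m - 1) := by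
            apply div_le_self (rTail_pos b bpos bsum _).le
            exact_mod_cast hm1
          _ ≤ rTail b 0 := rTail_le_zero b bpos bsum _
          _ ≤ A := hrb
  -- the packing bound at index m - 1
  have hbm : (m : ℝ≥0∞) * hb xb ≤ d₂ := by
    have h := (hdbnd (m - 1)).2
    have hc1 : ((m - 1 : ℕ) : ℝ≥0∞) + 1 = (m : ℝ≥0∞) := by
      exact_mod_cast congrArg (Nat.cast : ℕ → ℝ≥0∞) hmsub
    have hc2 : ((m - 1 : ℕ) : ℝ) + 1 = (m : ℝ) := by
      exact_mod_cast congrArg (Nat.cast : ℕ → ℝ) hmsub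
    rwa [hc1, hc2] at h
  -- strict comparison xb < xa
  have hlt : xb < xa := by
    by_contra hcon
    push_neg at hcon
    have hmono : hb xa ≤ hb xb := hbmono.monotoneOn hxa hxb hcon
    have hch : (j : ℝ≥0∞) * c₁ ≤ c * d₂ := by
      calc (j : ℝ≥0∞) * c₁
          ≤ (j : ℝ≥0∞) * (((n : ℝ≥0∞) + 1) * ha xa) :=
            mul_le_mul_right (hcbnd n).1 _
        _ ≤ (j : ℝ≥0∞) * (((n : ℝ≥0∞) + 1) * (c * hb xa)) :=
            mul_le_mul_right (mul_le_mul_right (hcle xa hxa) _) _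
        _ ≤ (j : ℝ≥0∞) * (((n : ℝ≥0∞) + 1) * (c * hb xb)) :=
            mul_le_mul_right (mul_le_mul_right (mul_le_mul_right hmono _) _) _
        _ = c * ((m : ℝ≥0∞) * hb xb) := by
            have : (j : ℝ≥0∞) * ((n : ℝ≥0∞) + 1) = (m : ℝ≥0∞) := by
              rw [hmdef]; push_cast; ring
            rw [← this]; ring
        _ ≤ c * d₂ := mul_le_mul_right hbm _
    exact absurd hch (not_le.mpr hkey)
  -- conclude
  have hmcast : (m : ℝ) = (j : ℝ) * ((n : ℝ) + 1) := by
    rw [hmdef]; push_cast; ring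
  rw [hxbdef, hxadef, div_lt_div_iff₀ hmR hn1, hmcast] at hlt
  have hjR : (0 : ℝ) < (j : ℝ) := by exact_mod_cast hjpos
  rw [div_le_iff₀ hjR]
  nlinarith [hlt, hn1]

end Aux

/-- if `h_a ≼ h_b` (dimension functions associated to `a`
and `b` respectively), then there is a positive integer `j` with
`rₙ^{(a)} ≥ r_{jn}^{(b)}/j` for all `n ≥ 1`; in particular, if `h_a ≡ h_b`
then `a` and `b` are weak tail-equivalent.
(0-based indices: paper's `rₙ` is `rTail · (n-1)`.) -/
theorem tail_bound_of_fleq (A : ℝ) (a b : ℕ → ℝ)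
    (apos : ∀ n, 0 < a n) (amono : ∀ n, a (n + 1) ≤ a n) (asum : Summable a)
    (bpos : ∀ n, 0 < b n) (bmono : ∀ n, b (n + 1) ≤ b n) (bsum : Summable b)
    (hra : rTail a 0 ≤ A) (hrb : rTail b 0 ≤ A)
    (ha hb : ℝ → ℝ≥0∞) (hda : IsDimFun A ha) (hdb : IsDimFun A hb)
    (haa : IsAssociated A ha a) (hbb : IsAssociated A hb b)
    (hle : FLeq A ha hb) :
    (∃ j : ℕ, 0 < j ∧
      ∀ n : ℕ, rTail b (j * (n + 1) - 1) / (j : ℝ) ≤ rTail a n) ∧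
    (FEquiv A ha hb → WeakTailEquiv a b) := by
  constructor
  · exact tail_bound_aux A a b apos asum bpos bsum hra hrb ha hb haa hbb hle
  · rintro ⟨h1, h2⟩
    obtain ⟨j, hj, hjb⟩ :=
      tail_bound_aux A a b apos asum bpos bsum hra hrb ha hb haa hbb h1
    obtain ⟨k, hk, hkb⟩ :=
      tail_bound_aux A b a bpos bsum apos asum hrb hra hb ha hbb haa h2
    exact ⟨j, k, hj, hk, hjb, hkb⟩
end

section
/- Let h and g be continuous increasing bijections between intervals (0,A] and (0,B] with h ≡ g. If the inverse function h⁻¹ is doubling, then h⁻¹ ≡ g⁻¹; in particular, g⁻¹ is also doubling. -/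
open Set Filter Metric MeasureTheory
open scoped ENNReal NNReal Topology

/-- Helper: to prove `f1 ≼ f2` on `(0,B]`, it suffices to have the comparison
on a small interval `(0,t]`, provided `f1` is bounded above by `A` and `f2` is
monotone and positive. -/
lemma rleq_of_small_aux (B A t K : ℝ) (ht : 0 < t) (htB : t ≤ B) (hApos : 0 < A)
    (f1 f2 : ℝ → ℝ)
    (hf1 : ∀ y ∈ Set.Ioc (0:ℝ) B, f1 y ≤ A)
    (hf2pos : ∀ y ∈ Set.Ioc (0:ℝ) B, 0 < f2 y)
    (hf2mono : ∀ y1 ∈ Set.Ioc (0:ℝ) B, ∀ y2 ∈ Set.Ioc (0:ℝ) B, y1 ≤ y2 → f2 y1 ≤ f2 y2)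
    (hK : 0 < K) (hsmall : ∀ y : ℝ, 0 < y → y ≤ t → f1 y ≤ K * f2 y) :
    RLeqOn (Set.Ioc 0 B) f1 f2 := by
  have htmem : t ∈ Set.Ioc (0:ℝ) B := ⟨ht, htB⟩
  have hf2t : 0 < f2 t := hf2pos t htmem
  refine ⟨max K (A / f2 t), lt_max_of_lt_left hK, ?_⟩
  intro y hy
  have hf2y := hf2pos y hy
  rcases le_or_gt y t with hle | hlt
  · calc f1 y ≤ K * f2 y := hsmall y hy.1 hle
      _ ≤ max K (A / f2 t) * f2 y :=
          mul_le_mul_of_nonneg_right (le_max_left _ _) hf2y.le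
  · have hmono : f2 t ≤ f2 y := hf2mono t htmem y hy hlt.le
    calc f1 y ≤ A := hf1 y hy
      _ = (A / f2 t) * f2 t := by field_simp
      _ ≤ (A / f2 t) * f2 y :=
          mul_le_mul_of_nonneg_left hmono (div_nonneg hApos.le hf2t.le)
      _ ≤ max K (A / f2 t) * f2 y :=
          mul_le_mul_of_nonneg_right (le_max_right _ _) hf2y.le

/-- Lemma: if `h, g` are continuous increasing bijections
from `(0,A]` onto `(0,B]` with `h ≡ g`, and the inverse `h'` of `h` is
doubling, then `h' ≡ g'` on `(0,B]`; in particular the inverse `g'` of `g` is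
also doubling. -/
theorem inverse_equiv_of_equiv_of_doubling (A B : ℝ) (hA : 0 < A) (hB : 0 < B)
    (h g h' g' : ℝ → ℝ)
    (hmono : StrictMonoOn h (Set.Ioc 0 A)) (gmono : StrictMonoOn g (Set.Ioc 0 A))
    (hcont : ContinuousOn h (Set.Ioc 0 A)) (gcont : ContinuousOn g (Set.Ioc 0 A))
    (hbij : Set.BijOn h (Set.Ioc 0 A) (Set.Ioc 0 B))
    (gbij : Set.BijOn g (Set.Ioc 0 A) (Set.Ioc 0 B))
    (hinv₁ : ∀ x ∈ Set.Ioc (0 : ℝ) A, h' (h x) = x)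
    (hinv₂ : ∀ y ∈ Set.Ioc (0 : ℝ) B, h (h' y) = y)
    (ginv₁ : ∀ x ∈ Set.Ioc (0 : ℝ) A, g' (g x) = x)
    (ginv₂ : ∀ y ∈ Set.Ioc (0 : ℝ) B, g (g' y) = y)
    (hequiv : REquivOn (Set.Ioc 0 A) h g)
    (hdoub : ∃ τ : ℝ, 0 < τ ∧ ∀ y : ℝ, 0 < y → 2 * y ≤ B → τ * h' (2 * y) ≤ h' y) :
    REquivOn (Set.Ioc 0 B) h' g' ∧
      ∃ τ : ℝ, 0 < τ ∧ ∀ y : ℝ, 0 < y → 2 * y ≤ B → τ * g' (2 * y) ≤ g' y := by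
  -- basic facts about the inverses
  have hmaps : ∀ y ∈ Set.Ioc (0:ℝ) B, h' y ∈ Set.Ioc (0:ℝ) A := by
    intro y hy
    obtain ⟨x, hx, rfl⟩ := hbij.surjOn hy
    rw [hinv₁ x hx]; exact hx
  have gmaps : ∀ y ∈ Set.Ioc (0:ℝ) B, g' y ∈ Set.Ioc (0:ℝ) A := by
    intro y hy
    obtain ⟨x, hx, rfl⟩ := gbij.surjOn hy
    rw [ginv₁ x hx]; exact hx
  have h'mono : ∀ y1 ∈ Set.Ioc (0:ℝ) B, ∀ y2 ∈ Set.Ioc (0:ℝ) B, y1 ≤ y2 → h' y1 ≤ h' y2 := by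
    intro y1 hy1 y2 hy2 hle
    by_contra hc
    push_neg at hc
    have := hmono (hmaps y2 hy2) (hmaps y1 hy1) hc
    rw [hinv₂ y1 hy1, hinv₂ y2 hy2] at this
    linarith
  have g'mono : ∀ y1 ∈ Set.Ioc (0:ℝ) B, ∀ y2 ∈ Set.Ioc (0:ℝ) B, y1 ≤ y2 → g' y1 ≤ g' y2 := by
    intro y1 hy1 y2 hy2 hle
    by_contra hc
    push_neg at hc
    have := gmono (gmaps y2 hy2) (gmaps y1 hy1) hc
    rw [ginv₂ y1 hy1, ginv₂ y2 hy2] at this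
    linarith
  -- transfer lemmas
  have htrans : ∀ x ∈ Set.Ioc (0:ℝ) A, ∀ y ∈ Set.Ioc (0:ℝ) B, h x ≤ y → x ≤ h' y := by
    intro x hx y hy hle
    have hhx : h x ∈ Set.Ioc (0:ℝ) B := hbij.mapsTo hx
    have := h'mono (h x) hhx y hy hle
    rwa [hinv₁ x hx] at this
  have gtrans : ∀ x ∈ Set.Ioc (0:ℝ) A, ∀ y ∈ Set.Ioc (0:ℝ) B, g x ≤ y → x ≤ g' y := by
    intro x hx y hy hle
    have hgx : g x ∈ Set.Ioc (0:ℝ) B := gbij.mapsTo hx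
    have := g'mono (g x) hgx y hy hle
    rwa [ginv₁ x hx] at this
  -- equivalence constants, normalized
  obtain ⟨⟨c1, hc1, hcg⟩, ⟨c2, hc2, hgc⟩⟩ := hequiv
  set c0 : ℝ := max (max c1 c2) 1 with hc0def
  have hc0one : (1:ℝ) ≤ c0 := le_max_right _ _
  have hc0pos : (0:ℝ) < c0 := lt_of_lt_of_le one_pos hc0one
  have hhg : ∀ x ∈ Set.Ioc (0:ℝ) A, h x ≤ c0 * g x := by
    intro x hx
    have hgx : 0 < g x := (gbij.mapsTo hx).1
    have : c1 ≤ c0 := le_trans (le_max_left _ _) (le_max_left _ _)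
    calc h x ≤ c1 * g x := hcg x hx
      _ ≤ c0 * g x := mul_le_mul_of_nonneg_right this hgx.le
  have hgh : ∀ x ∈ Set.Ioc (0:ℝ) A, g x ≤ c0 * h x := by
    intro x hx
    have hhx : 0 < h x := (hbij.mapsTo hx).1
    have : c2 ≤ c0 := le_trans (le_max_right _ _) (le_max_left _ _)
    calc g x ≤ c2 * h x := hgc x hx
      _ ≤ c0 * h x := mul_le_mul_of_nonneg_right this hhx.le
  obtain ⟨τ, hτ, hdb⟩ := hdoub
  -- pick N with c0 ≤ 2^N
  obtain ⟨N, hN⟩ : ∃ n : ℕ, c0 ≤ 2 ^ n := by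
    obtain ⟨n, hn⟩ := pow_unbounded_of_one_lt c0 (one_lt_two (α := ℝ))
    exact ⟨n, hn.le⟩
  have h2N : (0:ℝ) < 2 ^ N := by positivity
  have h1N : (1:ℝ) ≤ 2 ^ N := le_trans hc0one hN
  -- iterated doubling
  have hiter : ∀ n : ℕ, ∀ y : ℝ, 0 < y → 2 ^ n * y ≤ B → τ ^ n * h' (2 ^ n * y) ≤ h' y := by
    intro n
    induction n with
    | zero => intro y hy hle; simp
    | succ n ih =>
      intro y hy hle
      have hpow : (0:ℝ) < 2 ^ n := by positivity
      have heq : (2:ℝ) ^ (n + 1) * y = 2 * (2 ^ n * y) := by ring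
      have h2le : 2 * (2 ^ n * y) ≤ B := by rw [← heq]; exact hle
      have h1le : (2:ℝ) ^ n * y ≤ B := by nlinarith
      have key : τ * h' (2 * (2 ^ n * y)) ≤ h' (2 ^ n * y) :=
        hdb (2 ^ n * y) (by positivity) h2le
      rw [heq, pow_succ]
      calc τ ^ n * τ * h' (2 * (2 ^ n * y)) = τ ^ n * (τ * h' (2 * (2 ^ n * y))) := by ring
        _ ≤ τ ^ n * h' (2 ^ n * y) :=
            mul_le_mul_of_nonneg_left key (pow_nonneg hτ.le n)
        _ ≤ h' y := ih y hy h1le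
  have hτN : (0:ℝ) < τ ^ N := pow_pos hτ N
  set K : ℝ := (τ ^ N)⁻¹ with hKdef
  have hKpos : 0 < K := inv_pos.mpr hτN
  set t : ℝ := B / 2 ^ N with htdef
  have htpos : 0 < t := div_pos hB h2N
  have htB : t ≤ B := by
    rw [htdef, div_le_iff₀ h2N]; nlinarith
  -- small-argument comparison: g' ≤ K h'
  have small1 : ∀ y : ℝ, 0 < y → y ≤ t → g' y ≤ K * h' y := by
    intro y hy hyt
    have h2Ny : 2 ^ N * y ≤ B := by
      rw [htdef, le_div_iff₀ h2N] at hyt; linarith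
    have hyB : y ∈ Set.Ioc (0:ℝ) B := ⟨hy, le_trans hyt htB⟩
    have h2NyB : (2:ℝ) ^ N * y ∈ Set.Ioc (0:ℝ) B := ⟨by positivity, h2Ny⟩
    have hx : g' y ∈ Set.Ioc (0:ℝ) A := gmaps y hyB
    have hgx : g (g' y) = y := ginv₂ y hyB
    have hxh : h (g' y) ≤ 2 ^ N * y := by
      calc h (g' y) ≤ c0 * g (g' y) := hhg _ hx
        _ = c0 * y := by rw [hgx]
        _ ≤ 2 ^ N * y := mul_le_mul_of_nonneg_right hN hy.le
    have hle1 : g' y ≤ h' (2 ^ N * y) := htrans _ hx _ h2NyB hxh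
    have hle2 : τ ^ N * h' (2 ^ N * y) ≤ h' y := hiter N y hy h2Ny
    have : τ ^ N * g' y ≤ h' y :=
      le_trans (mul_le_mul_of_nonneg_left hle1 hτN.le) hle2
    rw [hKdef, inv_mul_eq_div, le_div_iff₀ hτN]
    linarith
  -- small-argument comparison: h' ≤ K g'
  have small2 : ∀ y : ℝ, 0 < y → y ≤ t → h' y ≤ K * g' y := by
    intro y hy hyt
    have h2Ny : 2 ^ N * y ≤ B := by
      rw [htdef, le_div_iff₀ h2N] at hyt; linarith
    have hyB : y ∈ Set.Ioc (0:ℝ) B := ⟨hy, le_trans hyt htB⟩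
    set z : ℝ := y / c0 with hzdef
    have hzpos : 0 < z := div_pos hy hc0pos
    have hzy : z ≤ y := by
      rw [hzdef, div_le_iff₀ hc0pos]; nlinarith
    have hzB : z ∈ Set.Ioc (0:ℝ) B := ⟨hzpos, le_trans hzy hyB.2⟩
    have hx : h' z ∈ Set.Ioc (0:ℝ) A := hmaps z hzB
    have hhx : h (h' z) = z := hinv₂ z hzB
    have hgxy : g (h' z) ≤ y := by
      calc g (h' z) ≤ c0 * h (h' z) := hgh _ hx
        _ = c0 * z := by rw [hhx]
        _ = y := by rw [hzdef]; field_simp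
    have hle1 : h' z ≤ g' y := gtrans _ hx _ hyB hgxy
    have h2Nz : (2:ℝ) ^ N * z ≤ B := by
      have : (2:ℝ) ^ N * z ≤ 2 ^ N * y := mul_le_mul_of_nonneg_left hzy h2N.le
      linarith
    have h2NzB : (2:ℝ) ^ N * z ∈ Set.Ioc (0:ℝ) B := ⟨by positivity, h2Nz⟩
    have hy2Nz : y ≤ 2 ^ N * z := by
      rw [hzdef, mul_div_assoc', le_div_iff₀ hc0pos]
      nlinarith
    have hle2 : h' y ≤ h' (2 ^ N * z) := h'mono y hyB _ h2NzB hy2Nz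
    have hle3 : τ ^ N * h' (2 ^ N * z) ≤ h' z := hiter N z hzpos h2Nz
    have : τ ^ N * h' y ≤ g' y := by
      calc τ ^ N * h' y ≤ τ ^ N * h' (2 ^ N * z) :=
            mul_le_mul_of_nonneg_left hle2 hτN.le
        _ ≤ h' z := hle3
        _ ≤ g' y := hle1
    rw [hKdef, inv_mul_eq_div, le_div_iff₀ hτN]
    linarith
  -- assemble the equivalence
  have req : REquivOn (Set.Ioc 0 B) h' g' := by
    constructor
    · exact rleq_of_small_aux B A t K htpos htB hA h' g'
        (fun y hy => (hmaps y hy).2) (fun y hy => (gmaps y hy).1) g'mono hKpos small2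
    · exact rleq_of_small_aux B A t K htpos htB hA g' h'
        (fun y hy => (gmaps y hy).2) (fun y hy => (hmaps y hy).1) h'mono hKpos small1
  refine ⟨req, ?_⟩
  -- g' is doubling
  obtain ⟨⟨C1, hC1, e1⟩, ⟨C2, hC2, e2⟩⟩ := req
  refine ⟨τ / (C1 * C2), div_pos hτ (mul_pos hC1 hC2), ?_⟩
  intro y hy h2yB
  have hy2 : 2 * y ∈ Set.Ioc (0:ℝ) B := ⟨by linarith, h2yB⟩
  have hyB : y ∈ Set.Ioc (0:ℝ) B := ⟨hy, by linarith⟩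
  have E1 : h' y ≤ C1 * g' y := e1 y hyB
  have E2 : g' (2 * y) ≤ C2 * h' (2 * y) := e2 (2 * y) hy2
  have E3 : τ * h' (2 * y) ≤ h' y := hdb y hy h2yB
  have goal' : τ * g' (2 * y) ≤ (C1 * C2) * g' y := by
    nlinarith [mul_le_mul_of_nonneg_left E2 hτ.le,
      mul_le_mul_of_nonneg_left E3 hC2.le,
      mul_le_mul_of_nonneg_left E1 hC2.le]
  rw [div_mul_eq_mul_div, div_le_iff₀ (mul_pos hC1 hC2)]
  linarith
end
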